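/- Let Q⊕ and Q− be disjoint finite index sets, X_t = 1 for t ∈ Q⊕ and X_t = -1 for t ∈ Q−, and let z, w ∈ [0,1]^m satisfy w(i) ≤ z(i) ≤ w(i) + 2γ coordinatewise. If Σ_{t∈Q⊕∪Q−} X_t·z(e_t)·c_t ≥ 0 and Σ_{t∈Q⊕} w(e_t)·c_t ≥ Λ + (4γ/(1-2ε))·Σ_{t∈Q⊕} c_t with Q⊕ ⊆ {t : X_t = 1}, then Σ_{t=1}^T X_t·w(e_t)·c_t + ((1-2ε)/2)·Σ_{t=1}^T w(e_t)·c_t ≥ 0, where the full sums over t = 1,...,T include additional indices with X_t = +1 beyond Q⊕ ∪ Q−. -/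
import Mathlib


theorem stmt_7 (m T : ℕ) (e : ℕ → Fin m) (X c : ℕ → ℝ) (z w : Fin m → ℝ)
    (Qop : Finset ℕ) (γ ε Λ : ℝ)
    (hγ : 0 < γ) (hε0 : 0 ≤ ε) (hε : ε < 1/2) (hΛ : 0 ≤ Λ)
    (hXval : ∀ t, X t = 1 ∨ X t = -1)
    (hinj : Set.InjOn e (Set.Iio T))
    (hz : ∀ i, z i ∈ Set.Icc (0:ℝ) 1) (hw : ∀ i, w i ∈ Set.Icc (0:ℝ) 1)
    (hc : ∀ t, c t ∈ Set.Icc (0:ℝ) 1)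
    (hzw : ∀ i, w i ≤ z i ∧ z i ≤ w i + 2*γ)
    (hQop : Qop ⊆ (Finset.range T).filter (fun t => X t = 1))
    (h1 : 0 ≤ ∑ t ∈ Qop ∪ (Finset.range T).filter (fun t => X t = -1), X t * z (e t) * c t)
    (h2 : ∑ t ∈ Qop, w (e t) * c t ≥ Λ + (4*γ/(1-2*ε)) * ∑ t ∈ Qop, c t) :
    0 ≤ (∑ t ∈ Finset.range T, X t * w (e t) * c t) +
        ((1-2*ε)/2) * ∑ t ∈ Finset.range T, w (e t) * c t := by
  set Qp := (Finset.range T).filter (fun t => X t = 1) with hQpdef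
  set Qm := (Finset.range T).filter (fun t => X t = -1) with hQmdef
  have hwc_nonneg : ∀ t, 0 ≤ w (e t) * c t := fun t =>
    mul_nonneg (hw (e t)).1 (hc t).1
  have hc_nonneg : ∀ t, 0 ≤ c t := fun t => (hc t).1
  have hXop : ∀ t ∈ Qop, X t = 1 := fun t ht => (Finset.mem_filter.mp (hQop ht)).2
  have hXm : ∀ t ∈ Qm, X t = -1 := fun t ht => (Finset.mem_filter.mp ht).2
  have hdisj : Disjoint Qop Qm := by
    refine Finset.disjoint_left.mpr fun t ht htm => ?_
    have := hXop t ht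
    have h2 := hXm t htm
    rw [this] at h2; norm_num at h2
  have hdisj2 : Disjoint Qp Qm := by
    refine Finset.disjoint_left.mpr fun t ht htm => ?_
    have := (Finset.mem_filter.mp ht).2
    have h2 := hXm t htm
    rw [this] at h2; norm_num at h2
  have hunion : Qp ∪ Qm = Finset.range T := by
    ext t
    simp only [hQpdef, hQmdef, Finset.mem_union, Finset.mem_filter]
    constructor
    · rintro (⟨h, _⟩ | ⟨h, _⟩) <;> exact h
    · intro h; rcases hXval t with hx | hx
      · exact Or.inl ⟨h, hx⟩
      · exact Or.inr ⟨h, hx⟩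
  -- abbreviations
  set A := ∑ t ∈ Qop, w (e t) * c t with hA
  set S := ∑ t ∈ Qop, c t with hS
  set B := ∑ t ∈ Qm, w (e t) * c t with hB
  set P := ∑ t ∈ Qp, w (e t) * c t with hP
  have hS0 : 0 ≤ S := Finset.sum_nonneg fun t _ => hc_nonneg t
  have hB0 : 0 ≤ B := Finset.sum_nonneg fun t _ => hwc_nonneg t
  have hA0 : 0 ≤ A := Finset.sum_nonneg fun t _ => hwc_nonneg t
  -- A ≤ P
  have hAP : A ≤ P :=
    Finset.sum_le_sum_of_subset_of_nonneg (fun t ht => Finset.mem_filter.mpr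
      ⟨(Finset.mem_filter.mp (hQop ht)).1, (Finset.mem_filter.mp (hQop ht)).2⟩)
      (fun t _ _ => hwc_nonneg t)
  -- rewrite h1
  have h1' : ∑ t ∈ Qm, z (e t) * c t ≤ ∑ t ∈ Qop, z (e t) * c t := by
    rw [Finset.sum_union hdisj] at h1
    have e1 : ∑ t ∈ Qop, X t * z (e t) * c t = ∑ t ∈ Qop, z (e t) * c t :=
      Finset.sum_congr rfl fun t ht => by rw [hXop t ht]; ring
    have e2 : ∑ t ∈ Qm, X t * z (e t) * c t = -∑ t ∈ Qm, z (e t) * c t := by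
      rw [← Finset.sum_neg_distrib]
      exact Finset.sum_congr rfl fun t ht => by rw [hXm t ht]; ring
    rw [e1, e2] at h1
    linarith
  have hBZm : B ≤ ∑ t ∈ Qm, z (e t) * c t :=
    Finset.sum_le_sum fun t _ => mul_le_mul_of_nonneg_right (hzw (e t)).1 (hc_nonneg t)
  have hZopA : ∑ t ∈ Qop, z (e t) * c t ≤ A + 2*γ*S := by
    have : ∑ t ∈ Qop, z (e t) * c t ≤ ∑ t ∈ Qop, (w (e t) * c t + 2*γ*c t) :=
      Finset.sum_le_sum fun t _ => by
        have := (hzw (e t)).2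
        nlinarith [hc_nonneg t]
    rw [Finset.sum_add_distrib, ← Finset.mul_sum] at this
    linarith
  have hBA : B ≤ A + 2*γ*S := le_trans hBZm (le_trans h1' hZopA)
  -- rewrite the goal sums
  have hsplit1 : ∑ t ∈ Finset.range T, X t * w (e t) * c t = P - B := by
    rw [← hunion, Finset.sum_union hdisj2]
    have e1 : ∑ t ∈ Qp, X t * w (e t) * c t = P :=
      Finset.sum_congr rfl fun t ht => by rw [(Finset.mem_filter.mp ht).2]; ring
    have e2 : ∑ t ∈ Qm, X t * w (e t) * c t = -B := by
      rw [hB, ← Finset.sum_neg_distrib]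
      exact Finset.sum_congr rfl fun t ht => by rw [hXm t ht]; ring
    rw [e1, e2]; ring
  have hsplit2 : ∑ t ∈ Finset.range T, w (e t) * c t = P + B := by
    rw [← hunion, Finset.sum_union hdisj2]
  rw [hsplit1, hsplit2]
  -- turn h2 into multiplied form
  have hden : 0 < 1 - 2*ε := by linarith
  have h2' : (1-2*ε) * A ≥ (1-2*ε) * Λ + 4*γ*S := by
    have := mul_le_mul_of_nonneg_left h2 (le_of_lt hden)
    have hd : (1-2*ε) * (4*γ/(1-2*ε) * S) = 4*γ*S := by
      field_simp
    nlinarith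
  nlinarith [mul_nonneg (le_of_lt hden) hΛ, mul_nonneg (mul_nonneg hγ.le hS0) (le_of_lt hden)]
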